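/- For any β > 0 and any finite collection of points x_k > 0 with positive weights w_k, the function J(v) = v + K₂·v·Σ_k f_β(√(v²+x_k²))·w_k (with K₂ > 0, f_β(t) = tanh((β/2)t)/t) is strictly increasing on [0,∞), satisfies J(0) = 0, and J(v) → ∞ as v → ∞; hence for every s ≥ 0 the equation J(v) = s has a unique solution v ≥ 0. -/
import Mathlib

lemma my_tanh_mono {a b : ℝ} (hab : a ≤ b) : Real.tanh a ≤ Real.tanh b := by
  rw [Real.tanh_eq_sinh_div_cosh, Real.tanh_eq_sinh_div_cosh,
    div_le_div_iff₀ (Real.cosh_pos a) (Real.cosh_pos b)]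
  have h : Real.sinh (a - b) ≤ 0 := Real.sinh_nonpos_iff.mpr (by linarith)
  rw [Real.sinh_sub] at h
  linarith

lemma my_continuous_tanh : Continuous Real.tanh := by
  have h : Real.tanh = fun x => Real.sinh x / Real.cosh x :=
    funext fun x => Real.tanh_eq_sinh_div_cosh x
  rw [h]
  exact Real.continuous_sinh.div Real.continuous_cosh fun x => (Real.cosh_pos x).ne'

lemma my_tanh_nonneg {a : ℝ} (ha : 0 ≤ a) : 0 ≤ Real.tanh a := by
  have := my_tanh_mono ha
  simpa [Real.tanh_zero] using this

theorem J_strictMono_and_bijective (β K₂ : ℝ) (hβ : 0 < β) (hK₂ : 0 < K₂)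
    (N : ℕ) (x w : Fin N → ℝ) (hx : ∀ k, 0 < x k) (hw : ∀ k, 0 < w k)
    (J : ℝ → ℝ)
    (hJ : ∀ v : ℝ, J v = v + K₂ * v * ∑ k : Fin N,
        (Real.tanh (β / 2 * Real.sqrt (v ^ 2 + x k ^ 2)) / Real.sqrt (v ^ 2 + x k ^ 2)) * w k) :
    StrictMonoOn J (Set.Ici 0) ∧ J 0 = 0 ∧
      Filter.Tendsto J Filter.atTop Filter.atTop ∧
      ∀ s : ℝ, 0 ≤ s → ∃! v : ℝ, 0 ≤ v ∧ J v = s := by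
  have hβ2 : 0 ≤ β / 2 := by linarith
  have hrpos : ∀ (k : Fin N) (v : ℝ), 0 < Real.sqrt (v ^ 2 + x k ^ 2) := by
    intro k v
    apply Real.sqrt_pos.mpr
    nlinarith [sq_nonneg v, hx k]
  -- key termwise monotonicity
  have hterm : ∀ (k : Fin N) (a b : ℝ), 0 ≤ a → a ≤ b →
      a * (Real.tanh (β / 2 * Real.sqrt (a ^ 2 + x k ^ 2)) / Real.sqrt (a ^ 2 + x k ^ 2)) ≤
      b * (Real.tanh (β / 2 * Real.sqrt (b ^ 2 + x k ^ 2)) / Real.sqrt (b ^ 2 + x k ^ 2)) := by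
    intro k a b ha hab
    have hb : 0 ≤ b := ha.trans hab
    set ra := Real.sqrt (a ^ 2 + x k ^ 2) with hra
    set rb := Real.sqrt (b ^ 2 + x k ^ 2) with hrb
    have hrap := hrpos k a
    have hrbp := hrpos k b
    have h1 : a / ra ≤ b / rb := by
      rw [div_le_div_iff₀ hrap hrbp]
      have e1 : a * rb = Real.sqrt (a ^ 2 * (b ^ 2 + x k ^ 2)) := by
        rw [Real.sqrt_mul (sq_nonneg a), Real.sqrt_sq ha]
      have e2 : b * ra = Real.sqrt (b ^ 2 * (a ^ 2 + x k ^ 2)) := by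
        rw [Real.sqrt_mul (sq_nonneg b), Real.sqrt_sq hb]
      rw [e1, e2]
      apply Real.sqrt_le_sqrt
      have hsq : a ^ 2 ≤ b ^ 2 := by nlinarith
      nlinarith [mul_nonneg (sub_nonneg.mpr hsq) (sq_nonneg (x k))]
    have h2 : Real.tanh (β / 2 * ra) ≤ Real.tanh (β / 2 * rb) := by
      apply my_tanh_mono
      have : ra ≤ rb := by
        apply Real.sqrt_le_sqrt; nlinarith
      nlinarith
    have h3 : 0 ≤ a / ra := div_nonneg ha hrap.le
    have h4 : 0 ≤ Real.tanh (β / 2 * rb) :=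
      my_tanh_nonneg (by positivity)
    calc a * (Real.tanh (β / 2 * ra) / ra) = (a / ra) * Real.tanh (β / 2 * ra) := by ring
      _ ≤ (b / rb) * Real.tanh (β / 2 * rb) := mul_le_mul h1 h2 (my_tanh_nonneg (by positivity)) (le_trans h3 h1)
      _ = b * (Real.tanh (β / 2 * rb) / rb) := by ring
  have hSM : StrictMonoOn J (Set.Ici 0) := by
    intro a ha b hb hab
    rw [hJ a, hJ b]
    have ha0 : (0:ℝ) ≤ a := ha
    have hsum : K₂ * a * ∑ k : Fin N,
        (Real.tanh (β / 2 * Real.sqrt (a ^ 2 + x k ^ 2)) / Real.sqrt (a ^ 2 + x k ^ 2)) * w k ≤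
        K₂ * b * ∑ k : Fin N,
        (Real.tanh (β / 2 * Real.sqrt (b ^ 2 + x k ^ 2)) / Real.sqrt (b ^ 2 + x k ^ 2)) * w k := by
      rw [mul_assoc, mul_assoc]
      apply mul_le_mul_of_nonneg_left _ hK₂.le
      rw [Finset.mul_sum, Finset.mul_sum]
      apply Finset.sum_le_sum
      intro k _
      have := hterm k a b ha0 hab.le
      have hwk := (hw k).le
      calc a * ((Real.tanh (β / 2 * Real.sqrt (a ^ 2 + x k ^ 2)) / Real.sqrt (a ^ 2 + x k ^ 2)) * w k)
          = (a * (Real.tanh (β / 2 * Real.sqrt (a ^ 2 + x k ^ 2)) / Real.sqrt (a ^ 2 + x k ^ 2))) * w k := by ring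
        _ ≤ (b * (Real.tanh (β / 2 * Real.sqrt (b ^ 2 + x k ^ 2)) / Real.sqrt (b ^ 2 + x k ^ 2))) * w k :=
            mul_le_mul_of_nonneg_right this hwk
        _ = b * ((Real.tanh (β / 2 * Real.sqrt (b ^ 2 + x k ^ 2)) / Real.sqrt (b ^ 2 + x k ^ 2)) * w k) := by ring
    linarith
  have hJ0 : J 0 = 0 := by rw [hJ 0]; ring
  -- J v ≥ v for v ≥ 0
  have hge : ∀ v : ℝ, 0 ≤ v → v ≤ J v := by
    intro v hv
    rw [hJ v]
    have : 0 ≤ ∑ k : Fin N,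
        (Real.tanh (β / 2 * Real.sqrt (v ^ 2 + x k ^ 2)) / Real.sqrt (v ^ 2 + x k ^ 2)) * w k := by
      apply Finset.sum_nonneg
      intro k _
      have := hrpos k v
      have ht : 0 ≤ Real.tanh (β / 2 * Real.sqrt (v ^ 2 + x k ^ 2)) :=
        my_tanh_nonneg (by positivity)
      have := hw k
      positivity
    have h0 := mul_nonneg (mul_nonneg hK₂.le hv) this
    linarith
  have htop : Filter.Tendsto J Filter.atTop Filter.atTop := by
    apply Filter.tendsto_atTop_mono' _ _ Filter.tendsto_id
    filter_upwards [Filter.eventually_ge_atTop (0:ℝ)] with v hv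
    exact hge v hv
  have hJc : Continuous J := by
    have hfun : J = fun v => v + K₂ * v * ∑ k : Fin N,
        (Real.tanh (β / 2 * Real.sqrt (v ^ 2 + x k ^ 2)) / Real.sqrt (v ^ 2 + x k ^ 2)) * w k :=
      funext hJ
    rw [hfun]
    apply continuous_id.add
    apply (continuous_const.mul continuous_id).mul
    apply continuous_finset_sum
    intro k _
    have hr : Continuous fun v : ℝ => Real.sqrt (v ^ 2 + x k ^ 2) :=
      Real.continuous_sqrt.comp ((continuous_pow 2).add continuous_const)
    exact ((my_continuous_tanh.comp (continuous_const.mul hr)).div hr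
      (fun v => (hrpos k v).ne')).mul continuous_const
  refine ⟨hSM, hJ0, htop, ?_⟩
  intro s hs
  obtain ⟨b, hb⟩ : ∃ b : ℝ, 0 ≤ b ∧ s ≤ J b := by
    have h1 := htop.eventually_ge_atTop s
    have h2 := Filter.eventually_ge_atTop (0:ℝ)
    exact ((h2.and h1).exists)
  have hsub := intermediate_value_Icc hb.1 hJc.continuousOn
  have hmem : s ∈ Set.Icc (J 0) (J b) := ⟨by rw [hJ0]; exact hs, hb.2⟩
  obtain ⟨v, hv, hJv⟩ := hsub hmem
  refine ⟨v, ⟨hv.1, hJv⟩, ?_⟩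
  intro u hu
  exact hSM.injOn hu.1 hv.1 (hu.2.trans hJv.symm)
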